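/- arXiv:1712.05945 — 4 statements merged into one kernel-verified Lean document; each statement's English description precedes it below -/
import Mathlib

section
/- For any polynomial P in C[X_1,...,X_n] of total degree δ(P) and any multi-index α ∈ ℕ^n, the derivative ∂^α(P(x)|x|^{-s}) satisfies |∂^α(P(x)|x|^{-s})| ≤ C·(1+|s|)^{|α|_1}·|x|^{-σ-|α|_1+δ(P)} uniformly in x ∈ ℝ^n with |x| ≥ 1, where σ = Re(s) and C depends only on P, α, n. -/
open scoped BigOperators

noncomputable def partialDerivC {n : ℕ} (i : Fin n)
    (f : EuclideanSpace ℝ (Fin n) → ℂ) : EuclideanSpace ℝ (Fin n) → ℂ :=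
  fun x => fderiv ℝ f x (EuclideanSpace.single i 1)

noncomputable def multiDerivC {n : ℕ} (α : Fin n → ℕ)
    (f : EuclideanSpace ℝ (Fin n) → ℂ) : EuclideanSpace ℝ (Fin n) → ℂ :=
  (List.finRange n).foldr (fun i g => (partialDerivC i)^[α i] g) f

namespace Stmt0Aux

open Complex Polynomial

variable {n : ℕ}

abbrev En (n : ℕ) := EuclideanSpace ℝ (Fin n)

abbrev Term (n : ℕ) := Polynomial ℂ × (Fin n → ℕ) × ℕ

noncomputable def Ny (y : En n) : ℝ := ∑ i, (y i) ^ 2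

noncomputable def ExpF (w : ℂ) (y : En n) : ℂ :=
  Complex.exp (w / 2 * (Real.log (Ny y) : ℂ))

noncomputable def monF (d : Fin n → ℕ) (y : En n) : ℂ := ∏ i, ((y i : ℝ) : ℂ) ^ d i

noncomputable def basicF (t : Term n) (s : ℂ) (y : En n) : ℂ :=
  t.1.eval s * (monF t.2.1 y * ExpF (-s - (t.2.2 : ℂ)) y)

noncomputable def sumF (L : List (Term n)) (s : ℂ) (y : En n) : ℂ :=
  (L.map fun t => basicF t s y).sum

noncomputable def stepT (j : Fin n) (t : Term n) : List (Term n) :=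
  [(t.1 * Polynomial.C (t.2.1 j : ℂ), Function.update t.2.1 j (t.2.1 j - 1), t.2.2),
   (t.1 * (-Polynomial.X - Polynomial.C (t.2.2 : ℂ)),
      Function.update t.2.1 j (t.2.1 j + 1), t.2.2 + 2)]

noncomputable def stepL (j : Fin n) (L : List (Term n)) : List (Term n) :=
  L.flatMap (stepT j)

lemma Ny_eq (y : En n) : Ny y = ‖y‖ ^ 2 := by
  rw [EuclideanSpace.norm_eq, Real.sq_sqrt (by positivity)]
  simp [Ny, Real.norm_eq_abs, sq_abs]

lemma Ny_pos {y : En n} (hy : y ≠ 0) : 0 < Ny y := by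
  rw [Ny_eq]
  have : 0 < ‖y‖ := norm_pos_iff.mpr hy
  positivity

lemma ExpF_shift (w : ℂ) {y : En n} (hy : y ≠ 0) :
    ExpF (w - 2) y = ExpF w y * ((Ny y : ℂ))⁻¹ := by
  have h := Ny_pos hy
  have hL : Complex.exp (-((Real.log (Ny y) : ℝ) : ℂ)) = ((Ny y : ℂ))⁻¹ := by
    rw [← Complex.ofReal_neg, ← Complex.ofReal_exp, Real.exp_neg, Real.exp_log h,
      Complex.ofReal_inv]
  rw [ExpF, ExpF, show (w - 2) / 2 * ((Real.log (Ny y) : ℝ) : ℂ)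
      = w / 2 * ((Real.log (Ny y) : ℝ) : ℂ) + -((Real.log (Ny y) : ℝ) : ℂ) by ring,
    Complex.exp_add, hL]

lemma norm_ExpF (w : ℂ) {y : En n} (hy : y ≠ 0) :
    ‖ExpF w y‖ = ‖y‖ ^ w.re := by
  have h0 : 0 < ‖y‖ := norm_pos_iff.mpr hy
  rw [ExpF, Complex.norm_exp]
  have h1 : w / 2 * ((Real.log (Ny y) : ℝ) : ℂ) = ((Real.log (Ny y) / 2 : ℝ) : ℂ) * w := by
    push_cast; ring
  rw [h1, Complex.re_ofReal_mul]
  have h2 : Real.log (Ny y) = 2 * Real.log ‖y‖ := by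
    rw [Ny_eq]
    rw [Real.log_pow]; push_cast; ring
  rw [h2, Real.rpow_def_of_pos h0]
  ring_nf

lemma monF_update (d : Fin n → ℕ) (j : Fin n) (a : ℕ) (y : En n) :
    monF (Function.update d j a) y
      = ((y j : ℝ) : ℂ) ^ a * ∏ m ∈ Finset.univ.erase j, ((y m : ℝ) : ℂ) ^ d m := by
  rw [monF, ← Finset.mul_prod_erase _ _ (Finset.mem_univ j), Function.update_self]
  congr 1
  exact Finset.prod_congr rfl fun i hi => by
    rw [Function.update_of_ne (Finset.ne_of_mem_erase hi)]

lemma monF_split (d : Fin n → ℕ) (j : Fin n) (y : En n) :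
    monF d y = ((y j : ℝ) : ℂ) ^ d j * ∏ m ∈ Finset.univ.erase j, ((y m : ℝ) : ℂ) ^ d m := by
  rw [monF, ← Finset.mul_prod_erase _ _ (Finset.mem_univ j)]

lemma basic_hasFDerivAt (t : Term n) (s : ℂ) {y : En n} (hy : y ≠ 0) :
    ∃ D : En n →L[ℝ] ℂ, HasFDerivAt (basicF t s) D y ∧
      ∀ j, D (EuclideanSpace.single j 1) = sumF (stepT j t) s y := by
  obtain ⟨c, d, k⟩ := t
  have hNy := Ny_pos hy
  set w : ℂ := -s - (k : ℂ) with hw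
  set pc : Fin n → (En n →L[ℝ] ℂ) := fun i => Complex.ofRealCLM ∘L (EuclideanSpace.proj i)
    with hpc
  have hpr : ∀ i : Fin n, HasFDerivAt (fun v : En n => v i)
      (EuclideanSpace.proj i : En n →L[ℝ] ℝ) y :=
    fun i => (EuclideanSpace.proj i : En n →L[ℝ] ℝ).hasFDerivAt
  have hprC : ∀ i : Fin n, HasFDerivAt (fun v : En n => ((v i : ℝ) : ℂ)) (pc i) y :=
    fun i => (pc i).hasFDerivAt
  have hmonI : ∀ i, HasFDerivAt (fun y : En n => ((y i : ℝ) : ℂ) ^ d i)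
      (((d i : ℂ) * ((y i : ℝ) : ℂ) ^ (d i - 1)) • pc i) y :=
    fun i => (hasDerivAt_pow (d i) ((y i : ℝ) : ℂ)).comp_hasFDerivAt y (hprC i)
  have hmon : HasFDerivAt (monF d)
      (∑ i, (∏ m ∈ Finset.univ.erase i, ((y m : ℝ) : ℂ) ^ d m) •
        (((d i : ℂ) * ((y i : ℝ) : ℂ) ^ (d i - 1)) • pc i)) y :=
    HasFDerivAt.finset_prod fun i _ => hmonI i
  have hNyD : HasFDerivAt (Ny (n := n))
      (∑ i, ((2 : ℝ) * y i ^ 1) • (EuclideanSpace.proj i : En n →L[ℝ] ℝ)) y :=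
    HasFDerivAt.fun_sum fun i _ =>
      by have h := (hasDerivAt_pow 2 (y i)).comp_hasFDerivAt y (hpr i); norm_num at h ⊢; exact h
  set DN : En n →L[ℝ] ℝ := ∑ i, ((2 : ℝ) * y i ^ 1) • (EuclideanSpace.proj i : En n →L[ℝ] ℝ)
    with hDNdef
  have hlog : HasFDerivAt (fun y : En n => Real.log (Ny y)) ((Ny y)⁻¹ • DN) y :=
    (Real.hasDerivAt_log (ne_of_gt hNy)).comp_hasFDerivAt y hNyD
  have hlogC : HasFDerivAt (fun y : En n => ((Real.log (Ny y) : ℝ) : ℂ))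
      (Complex.ofRealCLM ∘L ((Ny y)⁻¹ • DN)) y := Complex.ofRealCLM.hasFDerivAt.comp y hlog
  have hinner : HasFDerivAt (fun y : En n => w / 2 * ((Real.log (Ny y) : ℝ) : ℂ))
      ((w / 2) • (Complex.ofRealCLM ∘L ((Ny y)⁻¹ • DN))) y := hlogC.const_mul (w / 2)
  have hexp : HasFDerivAt (ExpF w)
      (ExpF w y • ((w / 2) • (Complex.ofRealCLM ∘L ((Ny y)⁻¹ • DN)))) y := hinner.cexp
  have hb := (hmon.mul hexp).const_mul (c.eval s)
  refine ⟨_, hb, fun j => ?_⟩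
  have hDN : DN (EuclideanSpace.single j 1) = 2 * y j := by
    simp [hDNdef, ContinuousLinearMap.sum_apply, PiLp.proj_apply,
      EuclideanSpace.single_apply, mul_ite, Finset.sum_ite_eq']
  simp only [ContinuousLinearMap.add_apply, ContinuousLinearMap.smul_apply,
    ContinuousLinearMap.coe_comp', Function.comp_apply, ContinuousLinearMap.coe_sum',
    Finset.sum_apply, Complex.ofRealCLM_apply, smul_eq_mul, hDN, hpc,
    PiLp.proj_apply, EuclideanSpace.single_apply, mul_ite, mul_one, mul_zero,
    Finset.sum_ite_eq']
  simp only [apply_ite Complex.ofReal, Complex.ofReal_one, Complex.ofReal_zero, mul_ite,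
    mul_one, mul_zero, Finset.sum_ite_eq', Finset.mem_univ, if_true]
  have hk2 : -s - ((k + 2 : ℕ) : ℂ) = w - 2 := by rw [hw]; push_cast; ring
  have hNz : ((Ny y : ℝ) : ℂ) ≠ 0 := by
    exact_mod_cast Complex.ofReal_ne_zero.mpr (ne_of_gt hNy)
  rw [sumF, stepT]
  simp only [List.map_cons, List.map_nil, List.sum_cons, List.sum_nil, add_zero, basicF,
    Polynomial.eval_mul, Polynomial.eval_C, Polynomial.eval_sub, Polynomial.eval_neg,
    Polynomial.eval_X, hk2]
  rw [monF_update, monF_update, ExpF_shift _ hy, monF_split d j y, ← hw]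
  push_cast
  field_simp
  ring

lemma sumF_cons (t : Term n) (L : List (Term n)) (s : ℂ) (y : En n) :
    sumF (t :: L) s y = basicF t s y + sumF L s y := by simp [sumF]

lemma sumF_append (L1 L2 : List (Term n)) (s : ℂ) (y : En n) :
    sumF (L1 ++ L2) s y = sumF L1 s y + sumF L2 s y := by simp [sumF]

lemma sum_hasFDerivAt (L : List (Term n)) (s : ℂ) {y : En n} (hy : y ≠ 0) :
    ∃ D : En n →L[ℝ] ℂ, HasFDerivAt (sumF L s) D y ∧
      ∀ j, D (EuclideanSpace.single j 1) = sumF (stepL j L) s y := by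
  induction L with
  | nil =>
    exact ⟨0, hasFDerivAt_const (0 : ℂ) y, fun j => by simp [stepL, sumF]⟩
  | cons t L ih =>
    obtain ⟨D1, h1, e1⟩ := basic_hasFDerivAt t s hy
    obtain ⟨D2, h2, e2⟩ := ih
    refine ⟨D1 + D2, h1.add h2, fun j => ?_⟩
    rw [ContinuousLinearMap.add_apply, e1, e2]
    show _ = sumF ((t :: L).flatMap (stepT j)) s y
    rw [List.flatMap_cons, sumF_append]
    rfl

noncomputable def cnorm (c : Polynomial ℂ) : ℝ := ∑ i ∈ Finset.range (c.natDegree + 1), ‖c.coeff i‖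

lemma cnorm_nonneg (c : Polynomial ℂ) : 0 ≤ cnorm c :=
  Finset.sum_nonneg fun _ _ => norm_nonneg _

lemma eval_le {c : Polynomial ℂ} {m : ℕ} (hm : c.natDegree ≤ m) (s : ℂ) :
    ‖c.eval s‖ ≤ cnorm c * (1 + ‖s‖) ^ m := by
  rw [Polynomial.eval_eq_sum_range, cnorm, Finset.sum_mul]
  refine (norm_sum_le _ _).trans (Finset.sum_le_sum fun i hi => ?_)
  rw [norm_mul, norm_pow]
  refine mul_le_mul_of_nonneg_left ?_ (norm_nonneg _)
  calc ‖s‖ ^ i ≤ (1 + ‖s‖) ^ i := by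
        refine pow_le_pow_left₀ (norm_nonneg _) (by linarith) i
    _ ≤ (1 + ‖s‖) ^ m := by
        refine pow_le_pow_right₀ (by have := norm_nonneg s; linarith) ?_
        have := Finset.mem_range.mp hi
        omega

def Inv (δ m : ℕ) (t : Term n) : Prop :=
  t.1.natDegree ≤ m ∧ (t.1 ≠ 0 → (∑ i, (t.2.1 i : ℤ)) ≤ (δ : ℤ) - m + t.2.2)

lemma inv_step {δ m : ℕ} (j : Fin n) {t : Term n} (h : Inv δ m t) :
    ∀ t' ∈ stepT j t, Inv δ (m + 1) t' := by
  obtain ⟨c, d, k⟩ := t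
  obtain ⟨h1', h2'⟩ := h
  have h1 : c.natDegree ≤ m := h1'
  have h2 : c ≠ 0 → (∑ i, (d i : ℤ)) ≤ (δ : ℤ) - m + k := h2'
  intro t' ht'
  have hsum : ∑ i, (d i : ℤ) = (d j : ℤ) + ∑ i ∈ Finset.univ.erase j, (d i : ℤ) :=
    (Finset.add_sum_erase _ _ (Finset.mem_univ j)).symm
  rw [stepT, List.mem_cons, List.mem_cons] at ht'
  dsimp only at ht'
  rcases ht' with rfl | rfl | h0
  · constructor
    · exact (Polynomial.natDegree_mul_le).trans (by rw [Polynomial.natDegree_C]; omega)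
    · intro hne
      rcases mul_ne_zero_iff.mp hne with ⟨hc, hdj⟩
      have hdj' : 1 ≤ d j := Nat.one_le_iff_ne_zero.mpr fun h0 => hdj (by simp [h0])
      have := h2 hc
      have hupd : ∑ i, ((Function.update d j (d j - 1) i : ℕ) : ℤ)
          = ((d j : ℤ) - 1) + ∑ i ∈ Finset.univ.erase j, (d i : ℤ) := by
        have : ∀ i, ((Function.update d j (d j - 1) i : ℕ) : ℤ)
            = Function.update (fun i => (d i : ℤ)) j ((d j : ℤ) - 1) i := by
          intro i
          rcases eq_or_ne i j with rfl | hij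
          · simp [Function.update_self, Nat.cast_sub hdj']
          · simp [Function.update_of_ne hij]
        rw [Finset.sum_congr rfl fun i _ => this i, Finset.sum_update_of_mem (Finset.mem_univ j)]
        congr 1
        · simp [Finset.sdiff_singleton_eq_erase]
      simp only [hupd]
      push_cast
      omega
  · constructor
    · refine (Polynomial.natDegree_mul_le).trans ?_
      have : (-Polynomial.X - Polynomial.C (k : ℂ)).natDegree ≤ 1 := by
        rw [show -Polynomial.X - Polynomial.C (k : ℂ)
            = -(Polynomial.X + Polynomial.C (k : ℂ)) by ring, Polynomial.natDegree_neg,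
          Polynomial.natDegree_X_add_C]
      omega
    · intro hne
      rcases mul_ne_zero_iff.mp hne with ⟨hc, -⟩
      have := h2 hc
      have hupd : ∑ i, ((Function.update d j (d j + 1) i : ℕ) : ℤ)
          = ((d j : ℤ) + 1) + ∑ i ∈ Finset.univ.erase j, (d i : ℤ) := by
        have : ∀ i, ((Function.update d j (d j + 1) i : ℕ) : ℤ)
            = Function.update (fun i => (d i : ℤ)) j ((d j : ℤ) + 1) i := by
          intro i
          rcases eq_or_ne i j with rfl | hij
          · simp [Function.update_self]
          · simp [Function.update_of_ne hij]
        rw [Finset.sum_congr rfl fun i _ => this i, Finset.sum_update_of_mem (Finset.mem_univ j)]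
        congr 1
        · simp [Finset.sdiff_singleton_eq_erase]
      simp only [hupd]
      push_cast
      omega
  · exact absurd h0 List.not_mem_nil

def Rep (δ m : ℕ) (f : ℂ → En n → ℂ) : Prop :=
  ∃ L : List (Term n), (∀ t ∈ L, Inv δ m t) ∧ ∀ s y, y ≠ 0 → f s y = sumF L s y

lemma Rep.step {δ m : ℕ} {f : ℂ → En n → ℂ} (h : Rep δ m f) (j : Fin n) :
    Rep δ (m + 1) (fun s => partialDerivC j (f s)) := by
  obtain ⟨L, hL, hf⟩ := h
  refine ⟨stepL j L, ?_, fun s y hy => ?_⟩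
  · intro t' ht'
    rw [stepL, List.mem_flatMap] at ht'
    obtain ⟨t, ht, h2⟩ := ht'
    exact inv_step j (hL t ht) t' h2
  · obtain ⟨D, hD, hDj⟩ := sum_hasFDerivAt L s hy
    have heq : f s =ᶠ[nhds y] sumF L s := by
      filter_upwards [eventually_ne_nhds hy] with z hz using hf s z hz
    show fderiv ℝ (f s) y (EuclideanSpace.single j 1) = _
    rw [heq.fderiv_eq, hD.fderiv, hDj j]

lemma Rep.iter {δ m : ℕ} {f : ℂ → En n → ℂ} (h : Rep δ m f) (j : Fin n) (a : ℕ) :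
    Rep δ (m + a) (fun s => (partialDerivC j)^[a] (f s)) := by
  induction a with
  | zero => simpa using h
  | succ a ih =>
    have := ih.step j
    simp only [Function.iterate_succ_apply'] at this ⊢
    rw [show m + (a + 1) = m + a + 1 by omega]
    exact this

lemma Rep.fold {δ m : ℕ} {f : ℂ → En n → ℂ} (h : Rep δ m f) (α : Fin n → ℕ)
    (l : List (Fin n)) :
    Rep δ (m + (l.map α).sum)
      (fun s => l.foldr (fun i g => (partialDerivC i)^[α i] g) (f s)) := by
  induction l with
  | nil => simpa using h
  | cons j l ih =>
    have := ih.iter j (α j)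
    rw [show m + ((j :: l).map α).sum = m + (l.map α).sum + α j by simp [List.map_cons]; omega]
    exact this

lemma rep_init (P : MvPolynomial (Fin n) ℂ) :
    Rep P.totalDegree 0
      (fun s (y : En n) => MvPolynomial.eval (fun i => ((y i : ℝ) : ℂ)) P * (‖y‖ : ℂ) ^ (-s)) := by
  refine ⟨P.support.toList.map (fun dd => (Polynomial.C (MvPolynomial.coeff dd P),
    fun i => dd i, 0)), ?_, ?_⟩
  · intro t ht
    simp only [List.mem_map, Finset.mem_toList] at ht
    obtain ⟨dd, hdd, rfl⟩ := ht
    refine ⟨by simp [Polynomial.natDegree_C], fun hne => ?_⟩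
    have h1 : (dd.sum fun _ e => e) ≤ P.totalDegree := MvPolynomial.le_totalDegree hdd
    have h2 : (dd.sum fun _ e => e) = ∑ i, dd i := Finsupp.sum_fintype _ _ fun _ => rfl
    have : (∑ i, dd i : ℕ) ≤ P.totalDegree := h2 ▸ h1
    dsimp only
    have h3 : (∑ i, (dd i : ℤ)) ≤ (P.totalDegree : ℤ) := by exact_mod_cast this
    omega
  · intro s y hy
    have hny : (0 : ℝ) < ‖y‖ := norm_pos_iff.mpr hy
    have hcpow : (‖y‖ : ℂ) ^ (-s) = ExpF (-s - ((0 : ℕ) : ℂ)) y := by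
      rw [ExpF, Complex.cpow_def_of_ne_zero (by exact_mod_cast ne_of_gt hny),
        ← Complex.ofReal_log (le_of_lt hny)]
      congr 1
      have h2 : Real.log (Ny y) = 2 * Real.log ‖y‖ := by
        rw [Ny_eq, Real.log_pow]; push_cast; ring
      rw [h2]
      push_cast
      ring
    show (MvPolynomial.eval fun i => ((y i : ℝ) : ℂ)) P * (‖y‖ : ℂ) ^ (-s) = _
    rw [MvPolynomial.eval_eq', hcpow, sumF, List.map_map, ← Finset.sum_map_toList,
      ← List.sum_map_mul_right]
    congr 1
    refine List.map_congr_left fun dd _ => ?_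
    simp only [Function.comp_apply, basicF, Polynomial.eval_C, monF]
    ring

lemma coord_le (y : En n) (i : Fin n) : |y i| ≤ ‖y‖ := by
  rw [EuclideanSpace.norm_eq]
  have : |y i| = Real.sqrt ((y i) ^ 2) := (Real.sqrt_sq_eq_abs _).symm
  rw [this]
  refine Real.sqrt_le_sqrt ?_
  have : (y i) ^ 2 = ‖y i‖ ^ 2 := by rw [Real.norm_eq_abs, _root_.sq_abs]
  rw [this]
  exact Finset.single_le_sum (f := fun j => ‖y j‖ ^ 2) (fun j _ => by positivity)
    (Finset.mem_univ i)

lemma basic_bound {δ m : ℕ} {t : Term n} (h : Inv δ m t) (s : ℂ) {x : En n} (hx : 1 ≤ ‖x‖) :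
    ‖basicF t s x‖ ≤ cnorm t.1 * (1 + ‖s‖) ^ m * ‖x‖ ^ ((δ : ℝ) - m - s.re) := by
  obtain ⟨c, d, k⟩ := t
  obtain ⟨h1', h2'⟩ := h
  have h1 : c.natDegree ≤ m := h1'
  have h2 : c ≠ 0 → (∑ i, (d i : ℤ)) ≤ (δ : ℤ) - m + k := h2'
  have hx0 : (0 : ℝ) < ‖x‖ := lt_of_lt_of_le one_pos hx
  have hxne : x ≠ 0 := norm_pos_iff.mp hx0
  by_cases hc : c = 0
  · have hc0 : cnorm (0 : Polynomial ℂ) = 0 := by simp [cnorm]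
    simp only [basicF, hc, Polynomial.eval_zero, zero_mul, norm_zero, hc0]
    positivity
  · rw [basicF, norm_mul, norm_mul, norm_ExpF _ hxne]
    have hre : (-s - ((k : ℕ) : ℂ)).re = -s.re - k := by simp
    have hmon : ‖monF d x‖ ≤ ‖x‖ ^ (∑ i, d i) := by
      rw [monF, norm_prod]
      calc ∏ i, ‖((x i : ℝ) : ℂ) ^ d i‖ = ∏ i, |x i| ^ d i := by
            refine Finset.prod_congr rfl fun i _ => ?_
            rw [norm_pow, Complex.norm_real, Real.norm_eq_abs]
        _ ≤ ∏ i, ‖x‖ ^ d i := Finset.prod_le_prod (fun i _ => by positivity)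
            (fun i _ => pow_le_pow_left₀ (abs_nonneg _) (coord_le x i) _)
        _ = ‖x‖ ^ (∑ i, d i) := Finset.prod_pow_eq_pow_sum _ _ _
    rw [hre]
    have hZ : ((∑ i, d i : ℕ) : ℤ) ≤ (δ : ℤ) - m + k := by
      have := h2 hc
      push_cast
      exact this
    have hR : ((∑ i, d i : ℕ) : ℝ) ≤ (δ : ℝ) - m + k := by exact_mod_cast hZ
    have key : ‖monF d x‖ * ‖x‖ ^ (-s.re - (k : ℝ)) ≤ ‖x‖ ^ ((δ : ℝ) - m - s.re) := by
      calc ‖monF d x‖ * ‖x‖ ^ (-s.re - (k : ℝ))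
          ≤ ‖x‖ ^ (∑ i, d i) * ‖x‖ ^ (-s.re - (k : ℝ)) :=
            mul_le_mul_of_nonneg_right hmon (Real.rpow_nonneg (le_of_lt hx0) _)
        _ = ‖x‖ ^ (((∑ i, d i : ℕ) : ℝ) + (-s.re - (k : ℝ))) := by
            rw [← Real.rpow_natCast ‖x‖ (∑ i, d i), ← Real.rpow_add hx0]
        _ ≤ ‖x‖ ^ ((δ : ℝ) - m - s.re) :=
            Real.rpow_le_rpow_of_exponent_le hx (by linarith)
    calc ‖Polynomial.eval s c‖ * (‖monF d x‖ * ‖x‖ ^ (-s.re - (k : ℝ)))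
        ≤ (cnorm c * (1 + ‖s‖) ^ m) * ‖x‖ ^ ((δ : ℝ) - m - s.re) := by
          refine mul_le_mul (eval_le h1 s) key ?_ ?_
          · exact mul_nonneg (norm_nonneg _) (Real.rpow_nonneg (le_of_lt hx0) _)
          · exact mul_nonneg (cnorm_nonneg c) (by positivity)
      _ = cnorm c * (1 + ‖s‖) ^ m * ‖x‖ ^ ((δ : ℝ) - m - s.re) := by ring

lemma sumF_bound (L : List (Term n)) {δ m : ℕ} (hL : ∀ t ∈ L, Inv δ m t) (s : ℂ)
    {x : En n} (hx : 1 ≤ ‖x‖) :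
    ‖sumF L s x‖ ≤ (L.map fun t => cnorm t.1).sum * (1 + ‖s‖) ^ m
      * ‖x‖ ^ ((δ : ℝ) - m - s.re) := by
  induction L with
  | nil => simp [sumF]
  | cons t L ih =>
    rw [sumF_cons, List.map_cons, List.sum_cons, add_mul, add_mul]
    exact (norm_add_le _ _).trans
      (add_le_add (basic_bound (hL t List.mem_cons_self) s hx)
        (ih fun u hu => hL u (List.mem_cons_of_mem t hu)))

end Stmt0Aux

/-- For a polynomial `P ∈ ℂ[X_1,…,X_n]` of total degree `δ(P)` and a
multi-index `α`, one has `|∂^α (P(x) |x|^{-s})| ≤ C (1+|s|)^{|α|₁} |x|^{-σ-|α|₁+δ(P)}`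
uniformly in `x` with `|x| ≥ 1`, where `σ = Re s` and `C = C(P, α, n)`. -/
theorem stmt0 {n : ℕ} (P : MvPolynomial (Fin n) ℂ) (α : Fin n → ℕ) :
    ∃ C > (0 : ℝ), ∀ (s : ℂ) (x : EuclideanSpace ℝ (Fin n)), 1 ≤ ‖x‖ →
      ‖multiDerivC α
          (fun y => MvPolynomial.eval (fun i => ((y i : ℝ) : ℂ)) P * (‖y‖ : ℂ) ^ (-s)) x‖
        ≤ C * (1 + ‖s‖) ^ (∑ i, α i)
            * ‖x‖ ^ (-s.re - ((∑ i, α i : ℕ) : ℝ) + (P.totalDegree : ℝ)) := by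

  classical
  obtain ⟨L, hL, hfeq⟩ := (Stmt0Aux.rep_init P).fold α (List.finRange n)
  have hMl : ((List.finRange n).map α).sum = ∑ i, α i := (Fin.sum_univ_def α).symm
  rw [zero_add, hMl] at hL
  have hS : 0 ≤ (L.map fun t => Stmt0Aux.cnorm t.1).sum :=
    List.sum_nonneg fun a ha => by
      obtain ⟨t, _, rfl⟩ := List.mem_map.mp ha
      exact Stmt0Aux.cnorm_nonneg t.1
  refine ⟨(L.map fun t => Stmt0Aux.cnorm t.1).sum + 1, by linarith, fun s x hx => ?_⟩
  have hx0 : x ≠ 0 := by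
    intro h; rw [h, norm_zero] at hx; linarith
  have hkey : multiDerivC α
      (fun y => MvPolynomial.eval (fun i => ((y i : ℝ) : ℂ)) P * (‖y‖ : ℂ) ^ (-s)) x
      = Stmt0Aux.sumF L s x := hfeq s x hx0
  rw [hkey]
  have hb := Stmt0Aux.sumF_bound L hL s hx
  have hexp : -s.re - ((∑ i, α i : ℕ) : ℝ) + (P.totalDegree : ℝ)
      = (P.totalDegree : ℝ) - (∑ i, α i : ℕ) - s.re := by ring
  rw [hexp]
  refine hb.trans ?_
  have hA : (0 : ℝ) ≤ (1 + ‖s‖) ^ (∑ i, α i) := by positivity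
  have hB : (0 : ℝ) ≤ ‖x‖ ^ ((P.totalDegree : ℝ) - (∑ i, α i : ℕ) - s.re) :=
    Real.rpow_nonneg (norm_nonneg x) _
  exact mul_le_mul_of_nonneg_right
    (mul_le_mul_of_nonneg_right (by linarith) hA) hB
end

section
/- There exists a polynomial P ∈ ℝ[X_1,...,X_p] of degree 4p with nonnegative coefficients (one can take P(X) = 5^p(1 + 4(X_1+...+X_p)^4)^p) such that for any k ∈ ℤ^n and l = (l_1,...,l_p) ∈ (ℤ^n)^p with k ≠ 0 and k ≠ -(l_1+...+l_i) for all 1 ≤ i ≤ p, one has 1/(|k+ĺ_1|²⋯|k+ĺ_p|²) ≤ |k|^{-2p}·P(|l_1|,...,|l_p|), where ĺ_i := l_1+...+l_i. -/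
/-!
Since `k` and every `k + ĺ_i` are nonzero integer vectors, their norms are at least `1`. With
`S = |l_1| + ⋯ + |l_p|` we have `|ĺ_i| ≤ S`, so the triangle inequality gives
`|k| ≤ |k + ĺ_i| + S ≤ |k + ĺ_i| (1 + S)`. Multiplying the squares over `i` yields
`|k|^{2p} ≤ (∏ |k + ĺ_i|²) (1 + S)^{2p} ≤ (∏ |k + ĺ_i|²) (1 + S)^{4p}`, so one may take
`P = (1 + X_1 + ⋯ + X_p)^{4p}`.
-/

open scoped BigOperators

/-- Euclidean norm of an integer vector. -/
noncomputable def znorm {n : ℕ} (k : Fin n → ℤ) : ℝ :=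
  Real.sqrt (∑ i, ((k i : ℝ)) ^ 2)

open MvPolynomial Finset

namespace MvPolynomial

variable {σ R : Type*}

section NonnegCoeff

variable [CommSemiring R] [PartialOrder R] [IsOrderedRing R]

variable (σ R) in
def nonnegCoeffSubsemiring : Subsemiring (MvPolynomial σ R) where
  carrier := {f | ∀ m, 0 ≤ f.coeff m}
  zero_mem' _ := by simp
  one_mem' m := by classical rw [coeff_one]; split_ifs <;> simp
  add_mem' hf hg m := by rw [coeff_add]; exact add_nonneg (hf m) (hg m)
  mul_mem' hf hg m := by
    classical rw [coeff_mul]; exact sum_nonneg fun x _ => mul_nonneg (hf _) (hg _)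

lemma X_mem_nonnegCoeffSubsemiring (i : σ) : X i ∈ nonnegCoeffSubsemiring σ R := fun m => by
  classical rw [coeff_X]; split_ifs <;> simp

end NonnegCoeff

theorem totalDegree_pow_of_isDomain [CommRing R] [IsDomain R] {f : MvPolynomial σ R}
    (hf : f ≠ 0) (n : ℕ) : (f ^ n).totalDegree = n * f.totalDegree := by
  induction n with
  | zero => simp
  | succ n ih =>
    rw [pow_succ, totalDegree_mul_of_isDomain (pow_ne_zero n hf) hf, ih, Nat.succ_mul]

theorem totalDegree_one_add_sum_X [CommSemiring R] [Nontrivial R] [Fintype σ] [Nonempty σ] :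
    (1 + ∑ i, X i : MvPolynomial σ R).totalDegree = 1 := by
  classical
  refine le_antisymm ?_ ?_
  · refine (totalDegree_add _ _).trans (max_le (by simp) ?_)
    exact (totalDegree_finsetSum _ _).trans (Finset.sup_le fun i _ => (totalDegree_X i).le)
  · obtain ⟨i⟩ := ‹Nonempty σ›
    have : (1 + ∑ i, X i : MvPolynomial σ R).coeff (Finsupp.single i 1) ≠ 0 := by
      simp [coeff_one, coeff_sum, coeff_X, Finsupp.single_eq_single_iff,
        (Finsupp.single_ne_zero.mpr one_ne_zero).symm]
    simpa using le_totalDegree (mem_support_iff.mpr this)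

theorem totalDegree_one_add_sum_X_pow [CommRing R] [IsDomain R] [Fintype σ] [Nonempty σ]
    (d : ℕ) : ((1 + ∑ i, X i : MvPolynomial σ R) ^ d).totalDegree = d := by
  have hne : (1 + ∑ i, X i : MvPolynomial σ R) ≠ 0 := fun h => by
    simpa [h] using (totalDegree_one_add_sum_X (σ := σ) (R := R))
  rw [totalDegree_pow_of_isDomain hne, totalDegree_one_add_sum_X, mul_one]

end MvPolynomial

lemma norm_le_norm_add_mul_one_add_norm {E : Type*} [SeminormedAddCommGroup E] {v w : E}
    (h : 1 ≤ ‖v + w‖) : ‖v‖ ≤ ‖v + w‖ * (1 + ‖w‖) := by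
  have := norm_sub_le (v + w) w
  rw [add_sub_cancel_right] at this
  nlinarith [norm_nonneg w]

def intToEuclidean (n : ℕ) : (Fin n → ℤ) →+ EuclideanSpace ℝ (Fin n) :=
  (WithLp.addEquiv 2 (Fin n → ℝ)).symm.toAddMonoidHom.comp
    ((Int.castAddHom ℝ).compLeft (Fin n))

lemma znorm_eq_norm_intToEuclidean {n : ℕ} (k : Fin n → ℤ) :
    znorm k = ‖intToEuclidean n k‖ := by
  simp [znorm, EuclideanSpace.norm_eq, intToEuclidean]

lemma znorm_nonneg {n : ℕ} (k : Fin n → ℤ) : 0 ≤ znorm k := Real.sqrt_nonneg _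

lemma one_le_znorm {n : ℕ} {k : Fin n → ℤ} (hk : k ≠ 0) : 1 ≤ znorm k := by
  obtain ⟨i, hi⟩ := Function.ne_iff.mp hk
  rw [znorm_eq_norm_intToEuclidean]
  calc (1 : ℝ) ≤ |(k i : ℝ)| := by exact_mod_cast Int.one_le_abs hi
    _ = ‖intToEuclidean n k i‖ := by simp [intToEuclidean]
    _ ≤ ‖intToEuclidean n k‖ := PiLp.norm_apply_le _ i

lemma znorm_sq_le_mul {n : ℕ} {k m : Fin n → ℤ} (hkm : k + m ≠ 0) :
    znorm k ^ 2 ≤ znorm (k + m) ^ 2 * (1 + znorm m) ^ 2 := by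
  have h := one_le_znorm hkm
  simp only [znorm_eq_norm_intToEuclidean, map_add] at h ⊢
  rw [← mul_pow]
  exact pow_le_pow_left₀ (norm_nonneg _) (norm_le_norm_add_mul_one_add_norm h) 2

lemma znorm_sum_Iic_le {n p : ℕ} (l : Fin p → Fin n → ℤ) (i : Fin p) :
    znorm (∑ j ∈ Iic i, l j) ≤ ∑ j, znorm (l j) := by
  simp only [znorm_eq_norm_intToEuclidean, map_sum]
  exact (norm_sum_le _ _).trans
    (sum_le_sum_of_subset_of_nonneg (subset_univ _) fun _ _ _ => norm_nonneg _)

lemma znorm_pow_le_prod_mul {n p : ℕ} (k : Fin n → ℤ) (m : Fin p → Fin n → ℤ) {S : ℝ}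
    (hkm : ∀ i, k + m i ≠ 0) (hS : ∀ i, znorm (m i) ≤ S) :
    znorm k ^ (2 * p) ≤ (∏ i, znorm (k + m i) ^ 2) * (1 + S) ^ (2 * p) := by
  calc znorm k ^ (2 * p)
    _ = ∏ _i : Fin p, znorm k ^ 2 := by
      rw [prod_const, card_univ, Fintype.card_fin, ← pow_mul, mul_comm]
    _ ≤ ∏ i, znorm (k + m i) ^ 2 * (1 + S) ^ 2 := by
      refine prod_le_prod (fun i _ => sq_nonneg _) fun i _ => (znorm_sq_le_mul (hkm i)).trans ?_
      have := znorm_nonneg (m i)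
      gcongr
      exact hS i
    _ = (∏ i, znorm (k + m i) ^ 2) * (1 + S) ^ (2 * p) := by
      rw [prod_mul_distrib, prod_const, card_univ, Fintype.card_fin, ← pow_mul, mul_comm 2]

/-- there is a polynomial `P ∈ ℝ[X_1,…,X_p]` of degree `4p` with
nonnegative coefficients such that for every `k ∈ ℤ^n` and `l ∈ (ℤ^n)^p` with `k ≠ 0`
and `k ≠ -ĺ_i` for all `i` (where `ĺ_i = l_1 + ⋯ + l_i`),
`1/(|k+ĺ_1|²⋯|k+ĺ_p|²) ≤ |k|^{-2p} P(|l_1|,…,|l_p|)`. -/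
theorem stmt8 (p : ℕ) :
    ∃ P : MvPolynomial (Fin p) ℝ,
      P.totalDegree = 4 * p ∧ (∀ m, 0 ≤ P.coeff m) ∧
      ∀ (n : ℕ) (k : Fin n → ℤ) (l : Fin p → Fin n → ℤ),
        k ≠ 0 → (∀ i : Fin p, k ≠ -(∑ j ∈ Finset.Iic i, l j)) →
        (∏ i : Fin p, znorm (k + ∑ j ∈ Finset.Iic i, l j) ^ 2)⁻¹
          ≤ (znorm k ^ (2 * p))⁻¹ * MvPolynomial.eval (fun i => znorm (l i)) P := by
  refine ⟨(1 + ∑ i, X i) ^ (4 * p), ?_, ?_, ?_⟩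
  · obtain rfl | hp := p.eq_zero_or_pos
    · simp
    · have : Nonempty (Fin p) := ⟨⟨0, hp⟩⟩
      exact totalDegree_one_add_sum_X_pow _
  · exact pow_mem (add_mem (one_mem _) (sum_mem fun i _ => X_mem_nonnegCoeffSubsemiring i)) _
  intro n k l hk hkl
  have hne : ∀ i, k + ∑ j ∈ Iic i, l j ≠ 0 := fun i h => hkl i (eq_neg_of_add_eq_zero_left h)
  have hprod : 0 < ∏ i, znorm (k + ∑ j ∈ Iic i, l j) ^ 2 :=
    prod_pos fun i _ => pow_pos (one_pos.trans_le (one_le_znorm (hne i))) 2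
  have hk0 : 0 < znorm k ^ (2 * p) := pow_pos (one_pos.trans_le (one_le_znorm hk)) _
  have hS : 1 ≤ 1 + ∑ j, znorm (l j) :=
    le_add_of_nonneg_right (sum_nonneg fun j _ => znorm_nonneg _)
  simp only [map_pow, map_add, map_one, map_sum, eval_X]
  rw [← div_eq_inv_mul, le_div_iff₀ hk0, inv_mul_le_iff₀ hprod]
  calc znorm k ^ (2 * p)
    _ ≤ (∏ i, znorm (k + ∑ j ∈ Iic i, l j) ^ 2) * (1 + ∑ j, znorm (l j)) ^ (2 * p) :=
      znorm_pow_le_prod_mul k _ hne (znorm_sum_Iic_le l)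
    _ ≤ _ := mul_le_mul_of_nonneg_left (pow_le_pow_right₀ hS (by omega)) hprod.le
end

section
/- Let D be an open neighborhood of 0 in ℂ and f, g functions on D × (ℤ^n)^p such that f − g satisfies condition (H1) and g satisfies condition (H2). Then Res_{s=0} Σ_{l∈(ℤ^n)^p} f(s,l) = Σ_{l∈(ℤ^n)^p} Res_{s=0} g(s,l); that is, residue and summation over l may be interchanged. -/
/-!
Write the integrand as `F l + G l`. Each `F l` is holomorphic on a disk containing the circle, so
its circle integral vanishes by Cauchy's theorem. On the circle `|s| = η` both families are
dominated by summable sequences (for `G`, the (H2) bound on the annulus `η / 2 < |s| < ρ'`), so by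
dominated convergence the circle integral commutes with the sum over `l`.
-/

open Metric

theorem circleIntegral.hasSum_integral_of_norm_le {E ι : Type*} [NormedAddCommGroup E]
    [NormedSpace ℂ E] [CompleteSpace E] [Countable ι] {f : ι → ℂ → E} {c : ℂ} {R : ℝ}
    {M : ι → ℝ} (hf : ∀ i, CircleIntegrable (f i) c R) (hM : Summable M)
    (hfM : ∀ i, ∀ z ∈ sphere c |R|, ‖f i z‖ ≤ M i) :
    HasSum (fun i => ∮ z in C(c, R), f i z) (∮ z in C(c, R), ∑' i, f i z) := by
  refine intervalIntegral.hasSum_integral_of_dominated_convergence (fun i _ => |R| * M i)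
    (fun i => (hf i).out.def'.1) (fun i => .of_forall fun θ _ => ?_)
    (.of_forall fun _ _ => hM.mul_left |R|) intervalIntegrable_const
    (.of_forall fun θ _ => ?_)
  · rw [norm_smul, deriv_circleMap, norm_mul, norm_circleMap_zero, Complex.norm_I, mul_one]
    exact mul_le_mul_of_nonneg_left (hfM i _ (circleMap_mem_sphere' c R θ)) (abs_nonneg R)
  · have hsum : Summable fun i => f i (circleMap c R θ) :=
      .of_norm_bounded hM fun i => hfM i _ (circleMap_mem_sphere' c R θ)
    exact hsum.hasSum.const_smul _

theorem stmt11_general {n p : ℕ}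
    (ρ ρ' : ℝ)
    (F G : (Fin p → Fin n → ℤ) → ℂ → ℂ)
    -- (H1) for f − g, with extensions F
    (hFan : ∀ l, AnalyticOnNhd ℂ (F l) (Metric.ball (0 : ℂ) ρ))
    (hFbd : ∃ M : (Fin p → Fin n → ℤ) → ℝ, Summable M ∧
        ∀ l, ∀ s ∈ Metric.ball (0 : ℂ) ρ, ‖F l s‖ ≤ M l)
    -- (H2) for g, with extensions G
    (hGan : ∀ l, AnalyticOnNhd ℂ (G l) (Metric.ball (0 : ℂ) ρ' \ {0}))
    (hGbd : ∀ δ : ℝ, 0 < δ → δ < ρ' → ∃ M : (Fin p → Fin n → ℤ) → ℝ, Summable M ∧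
        ∀ l, ∀ s : ℂ, δ < ‖s‖ → ‖s‖ < ρ' → ‖G l s‖ ≤ M l)
    (η : ℝ) (hη : 0 < η) (hηρ : η < ρ) (hηρ' : η < ρ') :
    (∮ z in C(0, η), ∑' l : Fin p → Fin n → ℤ, (F l z + G l z))
      = ∑' l : Fin p → Fin n → ℤ, ∮ z in C(0, η), G l z := by
  obtain ⟨M, hM, hFM⟩ := hFbd
  obtain ⟨M', hM', hGM'⟩ := hGbd (η / 2) (by linarith) (by linarith)
  have hsphereF : sphere (0 : ℂ) η ⊆ ball 0 ρ := sphere_subset_ball hηρ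
  have hsphereG : sphere (0 : ℂ) η ⊆ ball 0 ρ' \ {0} := fun z hz =>
    ⟨sphere_subset_ball hηρ' hz, ne_of_mem_sphere hz hη.ne'⟩
  have hFint l : CircleIntegrable (F l) 0 η :=
    ContinuousOn.circleIntegrable hη.le ((hFan l).continuousOn.mono hsphereF)
  have hGint l : CircleIntegrable (G l) 0 η :=
    ContinuousOn.circleIntegrable hη.le ((hGan l).continuousOn.mono hsphereG)
  have hFzero l : ∮ z in C(0, η), F l z = 0 :=
    ((hFan l).differentiableOn.diffContOnCl_ball
      (closedBall_subset_ball hηρ)).circleIntegral_eq_zero hη.le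
  have hFGM l : ∀ z ∈ sphere (0 : ℂ) |η|, ‖F l z + G l z‖ ≤ M l + M' l := by
    intro z hz
    rw [abs_of_pos hη] at hz
    have hz_norm : ‖z‖ = η := mem_sphere_zero_iff_norm.1 hz
    have hGz : ‖G l z‖ ≤ M' l := hGM' l z (by linarith) (by linarith)
    exact (norm_add_le _ _).trans (add_le_add (hFM l z (hsphereF hz)) hGz)
  rw [← (circleIntegral.hasSum_integral_of_norm_le (f := fun l z => F l z + G l z)
    (fun l => (hFint l).add (hGint l)) (hM.add hM') hFGM).tsum_eq]
  refine tsum_congr fun l => ?_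
  rw [circleIntegral.integral_add (hFint l) (hGint l), hFzero l, zero_add]

/-- interchange of residue at `0` and summation over `l ∈ (ℤ^n)^p`.
If `f − g` satisfies (H1) (witnessed by analytic extensions `F l` on the ball of radius
`ρ` with a summable uniform bound) and `g` satisfies (H2) (witnessed by analytic
extensions `G l` on the punctured ball of radius `ρ'` with summable uniform bounds on
every annulus), then `Res_{s=0} Σ_l f(s,l) = Σ_l Res_{s=0} g(s,l)`; residues are
expressed as circle integrals over a circle of radius `η` inside both balls. -/
theorem stmt11 {n p : ℕ} (D : Set ℂ) (hD : IsOpen D) (h0 : (0 : ℂ) ∈ D)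
    (f g : ℂ → (Fin p → Fin n → ℤ) → ℂ)
    (ρ ρ' : ℝ) (hρ : 0 < ρ) (hρ' : 0 < ρ')
    (F G : (Fin p → Fin n → ℤ) → ℂ → ℂ)
    -- (H1) for f − g, with extensions F
    (hFan : ∀ l, AnalyticOnNhd ℂ (F l) (Metric.ball (0 : ℂ) ρ))
    (hFeq : ∀ l, ∀ s ∈ D ∩ Metric.ball (0 : ℂ) ρ, s ≠ 0 → F l s = f s l - g s l)
    (hFbd : ∃ M : (Fin p → Fin n → ℤ) → ℝ, Summable M ∧
        ∀ l, ∀ s ∈ Metric.ball (0 : ℂ) ρ, ‖F l s‖ ≤ M l)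
    -- (H2) for g, with extensions G
    (hGan : ∀ l, AnalyticOnNhd ℂ (G l) (Metric.ball (0 : ℂ) ρ' \ {0}))
    (hGeq : ∀ l, ∀ s ∈ D ∩ Metric.ball (0 : ℂ) ρ', s ≠ 0 → G l s = g s l)
    (hGbd : ∀ δ : ℝ, 0 < δ → δ < ρ' → ∃ M : (Fin p → Fin n → ℤ) → ℝ, Summable M ∧
        ∀ l, ∀ s : ℂ, δ < ‖s‖ → ‖s‖ < ρ' → ‖G l s‖ ≤ M l)
    (η : ℝ) (hη : 0 < η) (hηρ : η < ρ) (hηρ' : η < ρ') :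
    (∮ z in C(0, η), ∑' l : Fin p → Fin n → ℤ, (F l z + G l z))
      = ∑' l : Fin p → Fin n → ℤ, ∮ z in C(0, η), G l z :=
  stmt11_general ρ ρ' F G hFan hFbd hGan hGbd η hη hηρ hηρ'
end

section
/- For the scalar Laplacian Δ = −Σ∂²_{x_i} on the flat torus T^d = ℝ^d/2πℤ^d, the operator (1+Δ)^{-d/2} is measurable in the sense of Dixmier and Tr_ω((1+Δ)^{-d/2}) = π^{d/2}/Γ(d/2 + 1) for every Dixmier trace Tr_ω. In particular lim_{N→∞} (1/log N)Σ_{n=0}^N μ_n((1+Δ)^{-d/2}) = π^{d/2}/Γ(d/2+1). -/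
open scoped BigOperators

/-!
The eigenvalues are `q n ^ (-d/2)` with `q n = 1 + |e n|²`, so everything rests on counting
lattice points: `#{k ∈ ℤ^d : |k|² ≤ T} ~ ω_d T^{d/2}`, where `ω_d = π^{d/2}/Γ(d/2+1)` is the
volume of the unit ball. Since `μ` is antitone, `q` is monotone and `n` lies between the
number of `m` with `q m ≤ q n - 1` and the number with `q m ≤ q n`; both are `~ ω_d (q n)^{d/2}`,
so `n μ_n → ω_d`. Writing `μ_n = ω_d/n + o(1/n)`, the partial sums are
`ω_d log N + o(log N)` because the harmonic numbers are `~ log N`.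
-/

open Filter MeasureTheory Topology Real Metric

section LatticePoints

variable (ι : Type*) [Fintype ι]

lemma covolume_span_basisFun :
    ZLattice.covolume (Submodule.span ℤ (Set.range (Pi.basisFun ℝ ι))) = 1 := by
  classical
  rw [ZLattice.covolume_eq_measure_fundamentalDomain _ _
    (ZSpan.isAddFundamentalDomain (Pi.basisFun ℝ ι) volume), measureReal_def,
    ZSpan.volume_fundamentalDomain]
  have : Matrix.of ⇑(Pi.basisFun ℝ ι) = 1 := by
    ext i j
    simp [Matrix.one_apply, Pi.single_apply, eq_comm]
  simp [this]

lemma mem_span_basisFun_iff {x : ι → ℝ} :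
    x ∈ Submodule.span ℤ (Set.range (Pi.basisFun ℝ ι)) ↔
      ∃ k : ι → ℤ, (fun i => (k i : ℝ)) = x := by
  rw [Module.Basis.mem_span_iff_repr_mem]
  simp only [Pi.basisFun_repr, Set.mem_range, eq_intCast, funext_iff]
  exact Classical.skolem

lemma ncard_sum_sq_le_inter_span_eq (r : ℝ) :
    ({x : ι → ℝ | ∑ i, x i ^ 2 ≤ r} ∩ Submodule.span ℤ (Set.range (Pi.basisFun ℝ ι))).ncard =
      {k : ι → ℤ | ∑ i, (k i : ℝ) ^ 2 ≤ r}.ncard := by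
  have hinj : Function.Injective fun (k : ι → ℤ) i => (k i : ℝ) :=
    fun k l h => funext fun i => Int.cast_injective (congrFun h i)
  rw [← Set.ncard_image_of_injective _ hinj]
  congr 1
  ext x
  simp only [Set.mem_inter_iff, Set.mem_ofPred_eq, SetLike.mem_coe, mem_span_basisFun_iff,
    Set.mem_image]
  constructor
  · rintro ⟨hx, k, rfl⟩
    exact ⟨k, hx, rfl⟩
  · rintro ⟨k, hk, rfl⟩
    exact ⟨hk, k, rfl⟩

lemma preimage_toLp_closedBall_sqrt {r : ℝ} (hr : 0 ≤ r) :
    WithLp.toLp 2 ⁻¹' closedBall (0 : EuclideanSpace ℝ ι) √r = {x | ∑ i, x i ^ 2 ≤ r} := by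
  ext x
  simp [EuclideanSpace.norm_eq, Real.sqrt_le_sqrt_iff hr]

lemma isBounded_preimage_toLp_closedBall (r : ℝ) :
    Bornology.IsBounded (WithLp.toLp 2 ⁻¹' closedBall (0 : EuclideanSpace ℝ ι) r) := by
  change Bornology.IsBounded ((EuclideanSpace.equiv ι ℝ).symm ⁻¹' _)
  rw [← (EuclideanSpace.equiv ι ℝ).image_eq_preimage_symm]
  exact (EuclideanSpace.equiv ι ℝ).lipschitz.isBounded_image isBounded_closedBall

lemma volume_frontier_preimage_toLp_closedBall [Nonempty ι] {r : ℝ} (hr : r ≠ 0) :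
    volume (frontier (WithLp.toLp 2 ⁻¹' closedBall (0 : EuclideanSpace ℝ ι) r)) = 0 := by
  change volume (frontier ((EuclideanSpace.equiv ι ℝ).symm.toHomeomorph ⁻¹' _)) = 0
  rw [← Homeomorph.preimage_frontier, frontier_closedBall _ hr]
  exact ((PiLp.volume_preserving_toLp ι).measure_preimage
    isClosed_sphere.measurableSet.nullMeasurableSet).trans (Measure.addHaar_sphere _ _ _)

theorem tendsto_ncard_sum_sq_le_div_rpow [Nonempty ι] :
    Tendsto (fun T : ℝ => ({k : ι → ℤ | ∑ i, (k i : ℝ) ^ 2 ≤ T}.ncard : ℝ)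
      / T ^ ((Fintype.card ι : ℝ) / 2)) atTop
      (𝓝 (π ^ ((Fintype.card ι : ℝ) / 2) / Gamma (Fintype.card ι / 2 + 1))) := by
  set n := Fintype.card ι
  set F : (ι → ℝ) → ℝ := fun x => ‖WithLp.toLp 2 x‖ ^ n
  have hF_smul (x : ι → ℝ) ⦃r : ℝ⦄ (hr : 0 ≤ r) : F (r • x) = r ^ n * F x := by
    simp only [F, WithLp.toLp_smul, norm_smul, mul_pow, Real.norm_of_nonneg hr]
  have hF_le {s : ℝ} (hs : 0 ≤ s) :
      {x ∈ Set.univ | F x ≤ s ^ n} = {x | ∑ i, x i ^ 2 ≤ s ^ 2} := by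
    rw [← preimage_toLp_closedBall_sqrt ι (sq_nonneg s), Real.sqrt_sq hs]
    ext x
    simpa [F] using pow_le_pow_iff_left₀ (norm_nonneg (WithLp.toLp 2 x : EuclideanSpace ℝ ι))
      hs (Fintype.card_ne_zero (α := ι))
  have hball : {x ∈ Set.univ | F x ≤ 1} = WithLp.toLp 2 ⁻¹' closedBall 0 1 := by
    rw [← Real.sqrt_one, preimage_toLp_closedBall_sqrt ι zero_le_one]
    simpa using hF_le zero_le_one
  have hvol : volume.real {x ∈ Set.univ | F x ≤ 1} = π ^ ((n : ℝ) / 2) / Gamma (n / 2 + 1) := by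
    rw [hball, measureReal_def, (PiLp.volume_preserving_toLp ι).measure_preimage
      measurableSet_closedBall.nullMeasurableSet, EuclideanSpace.volume_closedBall,
      rpow_div_two_eq_sqrt _ pi_pos.le, rpow_natCast]
    simp only [ENNReal.ofReal_one, one_pow, one_mul]
    exact ENNReal.toReal_ofReal (by positivity)
  have key := (ZLattice.covolume.tendsto_card_le_div
    (Submodule.span ℤ (Set.range (Pi.basisFun ℝ ι))) (X := Set.univ) (by simp) hF_smul
    (hball ▸ isBounded_preimage_toLp_closedBall ι 1)
    (hball ▸ measurableSet_closedBall.preimage (WithLp.measurable_toLp 2 _))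
    (hball ▸ volume_frontier_preimage_toLp_closedBall ι one_ne_zero)).comp
    (tendsto_rpow_atTop (by positivity : (0 : ℝ) < n / 2))
  rw [hvol, covolume_span_basisFun, div_one] at key
  refine key.congr' ?_
  filter_upwards [eventually_ge_atTop 0] with T hT
  simp only [Function.comp_apply, rpow_div_two_eq_sqrt _ hT, rpow_natCast,
    hF_le (Real.sqrt_nonneg T), Real.sq_sqrt hT, Nat.card_coe_set_eq,
    ncard_sum_sq_le_inter_span_eq]

end LatticePoints

lemma Filter.Tendsto.comp_sub_div_rpow {f : ℝ → ℝ} {α C : ℝ} (a : ℝ)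
    (hf : Tendsto (fun T => f T / T ^ α) atTop (𝓝 C)) :
    Tendsto (fun T => f (T - a) / T ^ α) atTop (𝓝 C) := by
  have hratio : Tendsto (fun T : ℝ => ((T - a) / T) ^ α) atTop (𝓝 1) := by
    have : Tendsto (fun T : ℝ => 1 - a * T⁻¹) atTop (𝓝 1) := by
      simpa using (tendsto_inv_atTop_zero.const_mul a).const_sub 1
    refine (Real.one_rpow α ▸ this.rpow_const (.inl one_ne_zero)).congr' ?_
    filter_upwards [eventually_ne_atTop 0] with T hT
    field_simp
  have := (hf.comp (tendsto_atTop_add_const_right _ (-a) tendsto_id)).mul hratio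
  rw [mul_one] at this
  refine this.congr' ?_
  filter_upwards [eventually_gt_atTop (max a 0)] with T hT
  have hTa : 0 < T - a := sub_pos.2 (lt_of_le_of_lt (le_max_left _ _) hT)
  have hT : 0 < T := lt_of_le_of_lt (le_max_right _ _) hT
  simp only [Function.comp_apply, id, ← sub_eq_add_neg]
  rw [Real.div_rpow hTa.le hT.le]
  field_simp [(Real.rpow_pos_of_pos hTa α).ne']

lemma Monotone.of_antitone_rpow_of_neg {ι : Type*} [Preorder ι] {q : ι → ℝ}
    (hq : ∀ n, 0 < q n) {s : ℝ} (hs : s < 0) (h : Antitone fun n => q n ^ s) : Monotone q :=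
  fun _ b hab => le_of_not_gt fun hlt => (h hab).not_gt (Real.rpow_lt_rpow_of_neg (hq b) hlt hs)

theorem tendsto_mul_rpow_neg_of_tendsto_ncard {q : ℕ → ℝ} (hq : Monotone q) {α C : ℝ}
    (hC : 0 < C) (hN : Tendsto (fun T => ({n | q n ≤ T}.ncard : ℝ) / T ^ α) atTop (𝓝 C)) :
    Tendsto (fun n : ℕ => n * q n ^ (-α)) atTop (𝓝 C) := by
  -- `ncard` of an infinite set is `0`, so `0 < C` forces the sublevel sets of `q` to be finite.
  have hfin (T : ℝ) : {n | q n ≤ T}.Finite := by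
    obtain ⟨S, hS_pos, hTS⟩ := ((hN.eventually (eventually_gt_nhds hC)).and
      (eventually_ge_atTop T)).exists
    refine Set.Finite.subset (s := {n | q n ≤ S}) ?_ fun n hn => le_trans hn hTS
    by_contra hinf
    simp [Set.Infinite.ncard hinf] at hS_pos
  have hq_top : Tendsto q atTop atTop := by
    refine tendsto_atTop_atTop_of_monotone hq fun b => ?_
    by_contra! h
    exact Set.infinite_univ ((hfin b).subset fun n _ => (h n).le)
  refine tendsto_of_tendsto_of_tendsto_of_le_of_le' ((hN.comp_sub_div_rpow 1).comp hq_top)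
    (hN.comp hq_top) ?_ ?_
  · filter_upwards [hq_top.eventually_gt_atTop 0] with n hn
    have hle : {m | q m ≤ q n - 1}.ncard ≤ n := by
      simpa using Set.ncard_le_ncard (s := {m | q m ≤ q n - 1}) (t := Set.Iio n)
        fun m hm => lt_of_not_ge fun hnm : n ≤ m => by linarith [hq hnm, hm.out]
    simp only [Function.comp_apply, Real.rpow_neg hn.le, ← div_eq_mul_inv]
    gcongr
  · filter_upwards [hq_top.eventually_gt_atTop 0] with n hn
    have hlt : n + 1 ≤ {m | q m ≤ q n}.ncard := by
      simpa using Set.ncard_le_ncard (s := Set.Iic n) (t := {m | q m ≤ q n})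
        (fun m hm => hq hm) (hfin _)
    simp only [Function.comp_apply, Real.rpow_neg hn.le, ← div_eq_mul_inv]
    gcongr
    exact_mod_cast (Nat.le_succ n).trans hlt

lemma tendsto_harmonic_div_log :
    Tendsto (fun n : ℕ => (harmonic n : ℝ) / log n) atTop (𝓝 1) := by
  have := (Real.tendsto_harmonic_sub_log.div_atTop
    (Real.tendsto_log_atTop.comp tendsto_natCast_atTop_atTop)).const_add 1
  rw [add_zero] at this
  refine this.congr' ?_
  filter_upwards [eventually_gt_atTop 1] with n hn
  have : log n ≠ 0 := (Real.log_pos (by exact_mod_cast hn)).ne'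
  simp only [Function.comp_apply]
  field_simp
  ring

theorem tendsto_sum_range_div_log_of_tendsto_mul {a : ℕ → ℝ} {C : ℝ}
    (ha : Tendsto (fun n : ℕ => n * a n) atTop (𝓝 C)) :
    Tendsto (fun N : ℕ => (∑ n ∈ Finset.range (N + 1), a n) / log N) atTop (𝓝 C) := by
  set g : ℕ → ℝ := fun n => (n : ℝ)⁻¹
  have hg_nonneg : 0 ≤ g := fun n => inv_nonneg.2 n.cast_nonneg
  have hg_sum (N : ℕ) : ∑ n ∈ Finset.range (N + 1), g n = harmonic N := by
    simp [g, Finset.sum_range_succ', harmonic]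
  have hg_top : Tendsto (fun N => ∑ n ∈ Finset.range N, g n) atTop atTop :=
    (not_summable_iff_tendsto_nat_atTop_of_nonneg hg_nonneg).1 Real.not_summable_natCast_inv
  have hlittle : (fun n => a n - C * g n) =o[atTop] g := by
    rw [Asymptotics.isLittleO_iff_tendsto' <| by
      filter_upwards [eventually_ne_atTop 0] with n hn hgn
      simp_all [g]]
    refine (tendsto_sub_nhds_zero_iff.2 ha).congr' ?_
    filter_upwards [eventually_ne_atTop 0] with n hn
    simp only [g]
    field_simp
  have hrem := ((hlittle.sum_range hg_nonneg hg_top).comp_tendsto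
    (tendsto_add_atTop_nat 1)).tendsto_div_nhds_zero
  simp only [Function.comp_def, Finset.sum_sub_distrib, ← Finset.mul_sum, hg_sum] at hrem
  have := (hrem.mul tendsto_harmonic_div_log).add (tendsto_harmonic_div_log.const_mul C)
  rw [zero_mul, zero_add, mul_one] at this
  refine this.congr' ?_
  filter_upwards [eventually_gt_atTop 0] with N hN
  have : (harmonic N : ℝ) ≠ 0 := by exact_mod_cast (harmonic_pos hN.ne').ne'
  field_simp
  ring

/-- on the torus `T^d = ℝ^d/2πℤ^d`, the operator `(1+Δ)^{-d/2}` is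
measurable with Dixmier trace `π^{d/2}/Γ(d/2+1)`.  Concretely: if `μ : ℕ → ℝ` is the
sequence of eigenvalues `(1+|k|²)^{-d/2}`, `k ∈ ℤ^d`, (i.e. of singular values of
`(1+Δ)^{-d/2}`) arranged in decreasing order, then
`(1/log N) Σ_{n=0}^N μ_n → π^{d/2}/Γ(d/2+1)` as `N → ∞`. -/
theorem stmt14 (d : ℕ) (hd : 0 < d) (e : ℕ ≃ (Fin d → ℤ)) (μ : ℕ → ℝ)
    (hμ : ∀ n : ℕ, μ n = (1 + ∑ i, ((e n i : ℤ) : ℝ) ^ 2) ^ (-(d : ℝ) / 2))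
    (hmono : Antitone μ) :
    Filter.Tendsto
      (fun N : ℕ => (∑ n ∈ Finset.range (N + 1), μ n) / Real.log N)
      Filter.atTop
      (nhds (Real.pi ^ ((d : ℝ) / 2) / Real.Gamma ((d : ℝ) / 2 + 1))) := by
  have : Nonempty (Fin d) := ⟨⟨0, hd⟩⟩
  set q : ℕ → ℝ := fun n => 1 + ∑ i, ((e n i : ℤ) : ℝ) ^ 2
  have hμq : μ = fun n => q n ^ (-((d : ℝ) / 2)) := funext fun n => by rw [hμ, neg_div]
  have hq_mono : Monotone q := Monotone.of_antitone_rpow_of_neg (fun n => by positivity)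
    (by simpa using hd) (hμq ▸ hmono)
  have hcount (T : ℝ) :
      {n | q n ≤ T}.ncard = {k : Fin d → ℤ | ∑ i, (k i : ℝ) ^ 2 ≤ T - 1}.ncard := by
    rw [← Set.ncard_preimage_of_injective_subset_range e.injective (by simp)]
    simp only [q, Set.preimage_ofPred_eq, le_sub_iff_add_le']
  have hN := (tendsto_ncard_sum_sq_le_div_rpow (Fin d)).comp_sub_div_rpow 1
  simp only [Fintype.card_fin, ← hcount] at hN
  refine tendsto_sum_range_div_log_of_tendsto_mul ?_
  rw [hμq]
  exact tendsto_mul_rpow_neg_of_tendsto_ncard hq_mono (by positivity) hN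
end
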